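/- arXiv:1801.02232 — 3 statements merged into one kernel-verified Lean document; each statement's English description precedes it below -/
import Mathlib

section
/- For every integer m with m ≠ 0 and m ≠ 3 and m ≠ -3, the polynomial P_m(x) = x^4 - m x^3 - 6 x^2 + m x + 1 is irreducible over ℚ. -/
open Polynomial

noncomputable def Pm (m : ℤ) : Polynomial ℚ :=
  X ^ 4 - C (m : ℚ) * X ^ 3 - 6 * X ^ 2 + C (m : ℚ) * X + 1

noncomputable def Qaux (m : ℤ) : Polynomial ℤ :=
  X ^ 4 - C m * X ^ 3 - C 6 * X ^ 2 + C m * X + C 1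

lemma Qaux_monic (m : ℤ) : (Qaux m).Monic := by unfold Qaux; monicity!

lemma Qaux_natDegree (m : ℤ) : (Qaux m).natDegree = 4 := by unfold Qaux; compute_degree!

lemma Qaux_no_root (m x : ℤ) : eval x (Qaux m) ≠ 0 := by
  intro h
  simp only [Qaux, eval_add, eval_sub, eval_mul, eval_pow, eval_C, eval_X] at h
  have hx : x ∣ 1 := ⟨-(x^3 - m*x^2 - 6*x + m), by linear_combination h⟩
  rcases Int.isUnit_iff.mp (isUnit_of_dvd_one hx) with rfl | rfl <;> omega

lemma monic_deg2 (p : Polynomial ℤ) (hm : p.Monic) (hd : p.natDegree = 2) :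
    p = X^2 + C (p.coeff 1) * X + C (p.coeff 0) := by
  ext n
  have h2 : p.coeff 2 = 1 := by
    have := hm.leadingCoeff; rwa [leadingCoeff, hd] at this
  match n with
  | 0 => simp only [coeff_add, coeff_X_pow, coeff_C_mul, coeff_X, coeff_C]; norm_num
  | 1 => simp only [coeff_add, coeff_X_pow, coeff_C_mul, coeff_X, coeff_C]; norm_num
  | 2 => simp only [coeff_add, coeff_X_pow, coeff_C_mul, coeff_X, coeff_C, h2]; norm_num
  | (n+3) =>
    rw [coeff_eq_zero_of_natDegree_lt (by omega)]
    simp only [coeff_add, coeff_X_pow, coeff_C_mul, coeff_X, coeff_C]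
    norm_num
    omega

lemma prod_expand (a b c d : ℤ) :
    (X^2 + C a * X + C b) * (X^2 + C c * X + C d) =
    X^4 + C (a+c) * X^3 + C (b+d+a*c) * X^2 + C (a*d+b*c) * X + C (b*d) := by
  simp only [map_add, map_mul]; ring

lemma Qaux_eq (m : ℤ) :
    Qaux m = X^4 + C (-m) * X^3 + C (-6) * X^2 + C m * X + C 1 := by
  simp only [Qaux, map_neg]; ring

lemma coeffs_eq {e3 e2 e1 e0 f3 f2 f1 f0 : ℤ}
    (h : (X:Polynomial ℤ)^4 + C e3 * X^3 + C e2 * X^2 + C e1 * X + C e0 =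
         X^4 + C f3 * X^3 + C f2 * X^2 + C f1 * X + C f0) :
    e3 = f3 ∧ e2 = f2 ∧ e1 = f1 ∧ e0 = f0 := by
  refine ⟨?_, ?_, ?_, ?_⟩ <;>
  · first
    | (have := congrArg (fun f => Polynomial.coeff f 3) h
       simp only [coeff_add, coeff_C_mul, coeff_X_pow, coeff_X, coeff_C] at this
       norm_num at this; exact this)
    | (have := congrArg (fun f => Polynomial.coeff f 2) h
       simp only [coeff_add, coeff_C_mul, coeff_X_pow, coeff_X, coeff_C] at this
       norm_num at this; exact this)
    | (have := congrArg (fun f => Polynomial.coeff f 1) h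
       simp only [coeff_add, coeff_C_mul, coeff_X_pow, coeff_X, coeff_C] at this
       norm_num at this; exact this)
    | (have := congrArg (fun f => Polynomial.coeff f 0) h
       simp only [coeff_add, coeff_C_mul, coeff_X_pow, coeff_X, coeff_C] at this
       norm_num at this; exact this)

lemma deg2_case (m a b c d : ℤ) (h0 : m ≠ 0) (h3 : m ≠ 3) (h3' : m ≠ -3)
    (hEq : Qaux m = (X^2 + C a * X + C b) * (X^2 + C c * X + C d)) : False := by
  rw [Qaux_eq, prod_expand] at hEq
  obtain ⟨e3, e2, e1, e0⟩ := coeffs_eq hEq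
  rcases Int.mul_eq_one_iff_eq_one_or_neg_one.mp e0.symm with ⟨rfl, rfl⟩ | ⟨rfl, rfl⟩
  · omega
  · have hac : a * c = -4 := by omega
    have ha4 : a ∣ 4 := ⟨-c, by linarith⟩
    have h1 : a ≤ 4 := Int.le_of_dvd (by norm_num) ha4
    have h2 : -4 ≤ a := by
      have := Int.le_of_dvd (show (0:ℤ) < 4 by norm_num) ((Int.neg_dvd).mpr ha4)
      omega
    interval_cases a <;> omega

lemma Qaux_irred (m : ℤ) (h0 : m ≠ 0) (h3 : m ≠ 3) (h3' : m ≠ -3) :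
    Irreducible (Qaux m) := by
  constructor
  · exact not_isUnit_of_natDegree_pos _ (by rw [Qaux_natDegree]; norm_num)
  · intro p q hpq
    by_contra hcon
    push_neg at hcon
    obtain ⟨hp, hq⟩ := hcon
    have hQ0 : Qaux m ≠ 0 := (Qaux_monic m).ne_zero
    have hp0 : p ≠ 0 := by rintro rfl; simp at hpq; exact hQ0 hpq
    have hq0 : q ≠ 0 := by rintro rfl; simp at hpq; exact hQ0 hpq
    have hdeg : p.natDegree + q.natDegree = 4 := by
      rw [← natDegree_mul hp0 hq0, ← hpq, Qaux_natDegree]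
    have hlc : p.leadingCoeff * q.leadingCoeff = 1 := by
      have := leadingCoeff_mul p q
      rw [← hpq, (Qaux_monic m).leadingCoeff] at this
      exact this.symm
    obtain ⟨p', q', hmp, hmq, hpq', hdp, hdq, hup, huq⟩ :
        ∃ p' q' : Polynomial ℤ, p'.Monic ∧ q'.Monic ∧ Qaux m = p' * q' ∧
          p'.natDegree = p.natDegree ∧ q'.natDegree = q.natDegree ∧
          (IsUnit p' → IsUnit p) ∧ (IsUnit q' → IsUnit q) := by
      rcases Int.mul_eq_one_iff_eq_one_or_neg_one.mp hlc with ⟨hl1, hl2⟩ | ⟨hl1, hl2⟩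
      · exact ⟨p, q, hl1, hl2, hpq, rfl, rfl, id, id⟩
      · refine ⟨-p, -q, ?_, ?_, by rw [hpq]; ring, natDegree_neg p, natDegree_neg q,
          fun h => by simpa using h.neg, fun h => by simpa using h.neg⟩
        · unfold Monic; rw [leadingCoeff_neg, hl1]; norm_num
        · unfold Monic; rw [leadingCoeff_neg, hl2]; norm_num
    rw [← hdp, ← hdq] at hdeg
    have hd4 : p'.natDegree ≤ 4 := by omega
    interval_cases hdp' : p'.natDegree
    · exact hup (hmp.natDegree_eq_zero.mp hdp' ▸ isUnit_one) |> hp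
    · have hroot := Qaux_no_root m (-(p'.coeff 0))
      rw [hpq', hmp.eq_X_add_C hdp'] at hroot
      simp at hroot
    · have hdq' : q'.natDegree = 2 := by omega
      exact deg2_case m (p'.coeff 1) (p'.coeff 0) (q'.coeff 1) (q'.coeff 0) h0 h3 h3'
        (by rw [← monic_deg2 p' hmp hdp', ← monic_deg2 q' hmq hdq']; exact hpq')
    · have hdq' : q'.natDegree = 1 := by omega
      have hroot := Qaux_no_root m (-(q'.coeff 0))
      rw [hpq', hmq.eq_X_add_C hdq'] at hroot
      simp at hroot
    · have hdq' : q'.natDegree = 0 := by omega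
      exact huq (hmq.natDegree_eq_zero.mp hdq' ▸ isUnit_one) |> hq

lemma map_Qaux (m : ℤ) : (Qaux m).map (Int.castRingHom ℚ) = Pm m := by
  simp only [Qaux, Pm, Polynomial.map_add, Polynomial.map_sub, Polynomial.map_mul,
    Polynomial.map_pow, map_X, map_C]
  norm_num
  exact map_ofNat C 6

theorem stmt_0 (m : ℤ) (h0 : m ≠ 0) (h3 : m ≠ 3) (h3' : m ≠ -3) :
    Irreducible (Pm m) := by
  rw [← map_Qaux m]
  exact (Polynomial.IsPrimitive.Int.irreducible_iff_irreducible_map_cast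
    (Qaux_monic m).isPrimitive).mp (Qaux_irred m h0 h3 h3')
end

section
/- Let m be a positive integer with v_2(m) = 2, with the odd part of m^2 + 16 squarefree, and let K = ℚ(θ) with θ a root of P_m(x) = x^4 - m x^3 - 6 x^2 + m x + 1. Then 2 is totally ramified in K: 2·O_K = P^4 where P = ⟨2, (1 + θ + θ^2 + θ^3)/4⟩. -/
open Polynomial IntermediateField NumberField

/-- The odd part of a natural number: `n` with all factors of 2 removed. -/
def oddPart (n : ℕ) : ℕ := n / 2 ^ (n.factorization 2)

theorem stmt_7 (m : ℤ) (hm : 1 ≤ m) (hv : padicValInt 2 m = 2)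
    (hsf : Squarefree (oddPart ((m ^ 2 + 16).natAbs)))
    (K : Type) [Field K] [NumberField K] (θ : K)
    (hθ : Polynomial.aeval θ (Pm m) = 0)
    (hgen : IntermediateField.adjoin ℚ {θ} = ⊤) :
    ∃ u : 𝓞 K,
      (u : K) = (1 + θ + θ ^ 2 + θ ^ 3) / 4 ∧
      (Ideal.span {(2 : 𝓞 K), u}).IsPrime ∧
      Ideal.span {(2 : 𝓞 K)} = Ideal.span {(2 : 𝓞 K), u} ^ 4 := by
  haveI : Fact (Nat.Prime 2) := ⟨Nat.prime_two⟩
  -- Step 1 : m = 4k with k odd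
  have hm0 : m ≠ 0 := by omega
  have h4 : ((2 : ℕ) : ℤ) ^ 2 ∣ m := by
    rw [padicValInt_dvd_iff]
    exact Or.inr (le_of_eq hv.symm)
  have h8 : ¬ ((2 : ℕ) : ℤ) ^ 3 ∣ m := by
    rw [padicValInt_dvd_iff]
    rintro (h | h) <;> omega
  obtain ⟨k, hk⟩ : ∃ k : ℤ, m = 4 * k := by
    obtain ⟨k, hk⟩ := h4; exact ⟨k, by push_cast at hk; linarith⟩
  have hkodd : Odd k := by
    rcases Int.even_or_odd k with ⟨l, hl⟩ | h
    · exact absurd ⟨l, by push_cast; omega⟩ h8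
    · exact h
  obtain ⟨j, hj⟩ := hkodd
  set f : ℤ := j * j + j with hf
  set e : ℤ := 2 * f + 1 with he
  have he2 : k ^ 2 + 1 = 2 * e := by rw [hj, he, hf]; ring
  -- Step 2 : the fundamental relation for β = (1+θ+θ²+θ³)/4
  set β : K := (1 + θ + θ ^ 2 + θ ^ 3) / 4 with hβ
  set A : ℤ := -8 * e * (4 * k + 1) with hA
  set B : ℤ := 8 * e * (5 * k - 3) with hB
  set C' : ℤ := 8 * e * (2 - k) with hC
  set D : ℤ := -2 * e with hD
  have hθ' : θ ^ 4 - (m : K) * θ ^ 3 - 6 * θ ^ 2 + (m : K) * θ + 1 = 0 := by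
    have := hθ
    simp only [Pm, map_add, map_sub, map_mul, map_pow, aeval_X, aeval_C, map_ofNat,
      map_intCast, map_one] at this
    linear_combination this
  have he' : ((k : K) ^ 2 + 1) = 2 * (e : K) := by exact_mod_cast congrArg (Int.cast : ℤ → K) he2
  have hrel : β ^ 4 + (A : K) * β ^ 3 + (B : K) * β ^ 2 + (C' : K) * β + (D : K) = 0 := by
    rw [hk] at hθ'
    rw [hβ, hA, hB, hC, hD]
    push_cast at hθ' ⊢
    linear_combination (((θ^8 + (4+4*(k:K))*θ^7 + (16+16*(k:K)+16*(k:K)^2)*θ^6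
      + (28+20*(k:K)+48*(k:K)^2)*θ^5 + (78+112*(k:K)^2)*θ^4
      + (108-20*(k:K)+128*(k:K)^2)*θ^3 + (144-16*(k:K)+144*(k:K)^2)*θ^2
      + (84-4*(k:K)+80*(k:K)^2)*θ + (49+48*(k:K)^2)))/256) * hθ'
      + (4*(4*(k:K)+1)*((1+θ+θ^2+θ^3)/4)^3 - 4*(5*(k:K)-3)*((1+θ+θ^2+θ^3)/4)^2
         - 4*(2-(k:K))*((1+θ+θ^2+θ^3)/4) + 1) * he'
  -- Step 3 : the annihilating integer polynomial
  set gZ : ℤ[X] := X ^ 4 + C A * X ^ 3 + C B * X ^ 2 + C C' * X + C D with hgZ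
  have hgmonic : gZ.Monic := by rw [hgZ]; monicity!
  have hgdeg : gZ.natDegree = 4 := by rw [hgZ]; compute_degree!
  have hβaZ : Polynomial.aeval β gZ = 0 := by
    rw [hgZ]
    simp only [map_add, map_mul, map_pow, aeval_X, aeval_C, algebraMap_int_eq, eq_intCast, map_intCast]
    linear_combination hrel
  have hβint : IsIntegral ℤ β := ⟨gZ, hgmonic, by rwa [aeval_def] at hβaZ⟩
  set u : 𝓞 K := ⟨β, hβint⟩ with hu
  have hcoe : (u : K) = β := rfl
  -- Step 4 : the relation in 𝓞 K
  have hrelu : u ^ 4 + (A : 𝓞 K) * u ^ 3 + (B : 𝓞 K) * u ^ 2 + (C' : 𝓞 K) * u + (D : 𝓞 K) = 0 := by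
    apply NumberField.RingOfIntegers.ext
    simp only [NumberField.RingOfIntegers.coe_eq_algebraMap, map_add, map_mul, map_pow,
      map_intCast, map_zero, hu, NumberField.RingOfIntegers.map_mk]
    change β ^ 4 + (A : K) * β ^ 3 + (B : K) * β ^ 2 + (C' : K) * β + (D : K) = 0
    linear_combination hrel
  -- Step 5 : the ideal computation
  set P : Ideal (𝓞 K) := Ideal.span {(2 : 𝓞 K), u} with hP
  have h2P : (2 : 𝓞 K) ∈ P := Ideal.subset_span (by simp)
  have huP : u ∈ P := Ideal.subset_span (by simp)
  have hpow4 : P ^ 4 = P * P * P * P := by ring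
  have hmul4 : ∀ x₁ ∈ P, ∀ x₂ ∈ P, ∀ x₃ ∈ P, ∀ x₄ ∈ P, x₁ * x₂ * x₃ * x₄ ∈ P ^ 4 := by
    intro x₁ h₁ x₂ h₂ x₃ h₃ x₄ h₄
    rw [hpow4]
    exact Ideal.mul_mem_mul (Ideal.mul_mem_mul (Ideal.mul_mem_mul h₁ h₂) h₃) h₄
  set w : 𝓞 K := ((4*e*(4*k+1) : ℤ) : 𝓞 K) * u ^ 3 - ((4*e*(5*k-3) : ℤ) : 𝓞 K) * u ^ 2
      - ((4*e*(2-k) : ℤ) : 𝓞 K) * u + ((e : ℤ) : 𝓞 K) with hw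
  have hu4 : u * u * u * u = 2 * w := by
    have h := hrelu
    rw [hA, hB, hC, hD] at h
    rw [hw]
    push_cast at h ⊢
    linear_combination h
  -- span {2} ≤ P ^ 4
  have h2e4 : ((2 * e : ℤ) : 𝓞 K) ∈ P ^ 4 := by
    have h := hrelu
    rw [hA, hB, hC, hD] at h
    have hrw : ((2 * e : ℤ) : 𝓞 K) = u * u * u * u
        + ((-4*e*(4*k+1) : ℤ) : 𝓞 K) * (2 * u * u * u)
        + ((2*e*(5*k-3) : ℤ) : 𝓞 K) * (2 * 2 * u * u)
        + ((e*(2-k) : ℤ) : 𝓞 K) * (2 * 2 * 2 * u) := by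
      push_cast at h ⊢
      linear_combination -h
    rw [hrw]
    refine add_mem (add_mem (add_mem ?_ ?_) ?_) ?_
    · exact hmul4 u huP u huP u huP u huP
    · exact Ideal.mul_mem_left _ _ (hmul4 2 h2P u huP u huP u huP)
    · exact Ideal.mul_mem_left _ _ (hmul4 2 h2P 2 h2P u huP u huP)
    · exact Ideal.mul_mem_left _ _ (hmul4 2 h2P 2 h2P 2 h2P u huP)
  have h164 : (16 : 𝓞 K) ∈ P ^ 4 := by
    have h16 : (16 : 𝓞 K) = 2 * 2 * 2 * 2 := by norm_num
    rw [h16]; exact hmul4 2 h2P 2 h2P 2 h2P 2 h2P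
  have h2in : (2 : 𝓞 K) ∈ P ^ 4 := by
    have hidZ : (2 : ℤ) = (e^3 - 8*e^2*f + 24*e*f^2 - 32*f^3) * (2*e) + (2*f^4) * 16 := by
      rw [he]; ring
    have hid : (2 : 𝓞 K) = ((e^3 - 8*e^2*f + 24*e*f^2 - 32*f^3 : ℤ) : 𝓞 K) * ((2*e : ℤ) : 𝓞 K)
        + ((2*f^4 : ℤ) : 𝓞 K) * (16 : 𝓞 K) := by exact_mod_cast congrArg (Int.cast : ℤ → 𝓞 K) hidZ
    rw [hid]
    exact add_mem (Ideal.mul_mem_left _ _ h2e4) (Ideal.mul_mem_left _ _ h164)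
  have hle : Ideal.span {(2 : 𝓞 K)} ≤ P ^ 4 := by
    rw [Ideal.span_le, Set.singleton_subset_iff]; exact h2in
  -- P ^ 4 ≤ span {2}
  have hPP : P * P ≤ Ideal.span {(2 : 𝓞 K), u * u} := by
    rw [hP, Ideal.mul_le]
    intro r hr s hs
    rw [Ideal.mem_span_pair] at hr hs ⊢
    obtain ⟨a₁, b₁, h₁⟩ := hr
    obtain ⟨a₂, b₂, h₂⟩ := hs
    exact ⟨2*a₁*a₂ + a₁*b₂*u + b₁*a₂*u, b₁*b₂, by rw [← h₁, ← h₂]; ring⟩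
  have hfin : Ideal.span {(2 : 𝓞 K), u * u} * Ideal.span {(2 : 𝓞 K), u * u}
      ≤ Ideal.span {(2 : 𝓞 K)} := by
    rw [Ideal.mul_le]
    intro r hr s hs
    rw [Ideal.mem_span_pair] at hr hs
    obtain ⟨a₁, b₁, h₁⟩ := hr
    obtain ⟨a₂, b₂, h₂⟩ := hs
    rw [Ideal.mem_span_singleton']
    exact ⟨2*a₁*a₂ + a₁*b₂*(u*u) + b₁*a₂*(u*u) + b₁*b₂*w,
      by rw [← h₁, ← h₂]; linear_combination (-(b₁*b₂)) * hu4⟩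
  have hP4le : P ^ 4 ≤ Ideal.span {(2 : 𝓞 K)} :=
    calc P ^ 4 = (P * P) * (P * P) := by ring
      _ ≤ Ideal.span {(2 : 𝓞 K), u * u} * Ideal.span {(2 : 𝓞 K), u * u} :=
          Ideal.mul_mono hPP hPP
      _ ≤ Ideal.span {(2 : 𝓞 K)} := hfin
  have hEq : Ideal.span {(2 : 𝓞 K)} = P ^ 4 := le_antisymm hle hP4le
  -- Step 6 : finrank ℚ K = 4
  have hPmmonic : (Pm m).Monic := by unfold Pm; monicity!
  have hPmdeg : (Pm m).natDegree = 4 := by unfold Pm; compute_degree!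
  have hθint : IsIntegral ℚ θ := ⟨Pm m, hPmmonic, by rwa [← aeval_def]⟩
  have hrank_le : Module.finrank ℚ K ≤ 4 := by
    rw [← IntermediateField.finrank_top', ← hgen, IntermediateField.adjoin.finrank hθint]
    calc (minpoly ℚ θ).natDegree ≤ (Pm m).natDegree :=
          natDegree_le_of_dvd (minpoly.dvd ℚ θ hθ) hPmmonic.ne_zero
      _ = 4 := hPmdeg
  have hgdegree : gZ.degree = 4 := by rw [hgZ]; compute_degree!
  have hirrZ : Irreducible gZ := by
    apply Polynomial.irreducible_of_eisenstein_criterion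
      (P := Ideal.span {(2 : ℤ)})
    · exact (Ideal.span_singleton_prime (by norm_num)).mpr Int.prime_two
    · rw [hgmonic.leadingCoeff, Ideal.mem_span_singleton]
      norm_num
    · intro n hn
      rw [hgdegree] at hn
      have hn4 : n < 4 := by exact_mod_cast hn
      rw [Ideal.mem_span_singleton]
      have hc0 : gZ.coeff 0 = D := by
        simp only [hgZ, coeff_add, coeff_C_mul, coeff_X_pow, coeff_C, coeff_X, coeff_one]
        norm_num
      have hc1 : gZ.coeff 1 = C' := by
        simp only [hgZ, coeff_add, coeff_C_mul, coeff_X_pow, coeff_C, coeff_X, coeff_one]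
        norm_num
      have hc2 : gZ.coeff 2 = B := by
        simp only [hgZ, coeff_add, coeff_C_mul, coeff_X_pow, coeff_C, coeff_X, coeff_one]
        norm_num
      have hc3 : gZ.coeff 3 = A := by
        simp only [hgZ, coeff_add, coeff_C_mul, coeff_X_pow, coeff_C, coeff_X, coeff_one]
        norm_num
      interval_cases n
      · rw [hc0, hD]; exact ⟨-e, by ring⟩
      · rw [hc1, hC]; exact ⟨4 * e * (2 - k), by ring⟩
      · rw [hc2, hB]; exact ⟨4 * e * (5 * k - 3), by ring⟩
      · rw [hc3, hA]; exact ⟨-4 * e * (4 * k + 1), by ring⟩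
    · rw [hgdegree]; norm_num
    · rw [Ideal.span_singleton_pow, Ideal.mem_span_singleton]
      have hc0 : gZ.coeff 0 = D := by
        simp only [hgZ, coeff_add, coeff_C_mul, coeff_X_pow, coeff_C, coeff_X, coeff_one]
        norm_num
      rw [hc0, hD, he]
      rintro ⟨c, hc⟩
      omega
    · exact hgmonic.isPrimitive
  have hirrQ : Irreducible (gZ.map (algebraMap ℤ ℚ)) := by
    have := (Polynomial.IsPrimitive.Int.irreducible_iff_irreducible_map_cast
      hgmonic.isPrimitive).mp hirrZ
    simpa [algebraMap_int_eq] using this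
  have hβaQ : Polynomial.aeval β (gZ.map (algebraMap ℤ ℚ)) = 0 := by
    rw [aeval_map_algebraMap]; exact hβaZ
  have hmp : minpoly ℚ β = gZ.map (algebraMap ℤ ℚ) :=
    (minpoly.eq_of_irreducible_of_monic hirrQ hβaQ (hgmonic.map _)).symm
  have hβintQ : IsIntegral ℚ β :=
    ⟨gZ.map (algebraMap ℤ ℚ), hgmonic.map _, by rwa [aeval_def] at hβaQ⟩
  have hge : 4 ≤ Module.finrank ℚ K := by
    have h1 : Module.finrank ℚ (IntermediateField.adjoin ℚ {β}) = 4 := by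
      rw [IntermediateField.adjoin.finrank hβintQ, hmp, hgmonic.natDegree_map, hgdeg]
    calc 4 = Module.finrank ℚ (IntermediateField.adjoin ℚ {β}) := h1.symm
      _ ≤ Module.finrank ℚ K := (IntermediateField.adjoin ℚ {β}).toSubmodule.finrank_le
  have hrank : Module.finrank ℚ K = 4 := le_antisymm hrank_le hge
  -- Step 7 : absNorm
  have habs2 : Ideal.absNorm (Ideal.span {(2 : 𝓞 K)}) = 16 := by
    rw [Ideal.absNorm_span_singleton]
    have h2' : (2 : 𝓞 K) = algebraMap ℤ (𝓞 K) 2 := by rw [map_ofNat]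
    rw [h2', Algebra.norm_algebraMap_of_basis (NumberField.RingOfIntegers.basis K),
      ← Module.finrank_eq_card_chooseBasisIndex, NumberField.RingOfIntegers.rank, hrank]
    norm_num
  have h16' : (Ideal.absNorm P) ^ 4 = 16 := by
    rw [← map_pow, ← hEq, habs2]
  have hPn : Ideal.absNorm P = 2 := by
    refine Nat.pow_left_injective (n := 4) (by norm_num) ?_
    show Ideal.absNorm P ^ 4 = 2 ^ 4
    rw [h16']
  have hprime : P.IsPrime := by
    apply Ideal.isPrime_of_irreducible_absNorm
    rw [hPn]
    exact Nat.prime_two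
  exact ⟨u, rfl, hprime, hEq⟩
end

section
/- For every integer m, the discriminant of the polynomial P_m(x) = x^4 - m x^3 - 6 x^2 + m x + 1 equals 4(m^2+16)^3. -/
open Polynomial Finset

set_option maxHeartbeats 1000000 in
/-- The discriminant of the monic quartic `Pm m`, expressed via its complex roots:
if `Pm m = ∏ i, (X - r i)` over `ℂ`, then `∏_{i < j} (r i - r j)^2 = 4 (m² + 16)³`. -/
theorem stmt_13 (m : ℤ) (r : Fin 4 → ℂ)
    (hr : (Pm m).map (algebraMap ℚ ℂ) = ∏ i : Fin 4, (X - C (r i))) :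
    (∏ i : Fin 4, ∏ j ∈ Finset.univ.filter (fun j => i < j), (r i - r j) ^ 2)
      = 4 * ((m : ℂ) ^ 2 + 16) ^ 3 := by
  have hev : ∀ t : ℂ, t ^ 4 - (m:ℂ) * t ^ 3 - 6 * t ^ 2 + (m:ℂ) * t + 1
      = (t - r 0) * (t - r 1) * (t - r 2) * (t - r 3) := by
    intro t
    have := congrArg (Polynomial.eval t) hr
    simpa [Pm, Fin.prod_univ_four] using this
  have H0 := hev 0
  have H1 := hev 1
  have H2 := hev (-1)
  have H3 := hev 2
  have H4 := hev (-2)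
  have he4 : r 0 * r 1 * r 2 * r 3 = 1 := by linear_combination -H0
  have he1 : r 0 + r 1 + r 2 + r 3 = (m:ℂ) := by
    linear_combination (H3 - H4)/12 + (H2 - H1)/6
  have he3 : r 0*r 1*r 2 + r 0*r 1*r 3 + r 0*r 2*r 3 + r 1*r 2*r 3 = -(m:ℂ) := by
    linear_combination (H4 - H3)/12 - 2*(H2 - H1)/3
  have he2 : r 0*r 1 + r 0*r 2 + r 0*r 3 + r 1*r 2 + r 1*r 3 + r 2*r 3 = -6 := by
    linear_combination -(H1 + H2)/2 + H0
  rw [Fin.prod_univ_four,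
    show (Finset.univ.filter (fun j => (0:Fin 4) < j)) = {1,2,3} from by decide,
    show (Finset.univ.filter (fun j => (1:Fin 4) < j)) = {2,3} from by decide,
    show (Finset.univ.filter (fun j => (2:Fin 4) < j)) = {3} from by decide,
    show (Finset.univ.filter (fun j => (3:Fin 4) < j)) = ∅ from by decide,
    Finset.prod_insert (by decide), Finset.prod_insert (by decide),
    Finset.prod_insert (by decide), Finset.prod_singleton, Finset.prod_singleton,
    Finset.prod_singleton, Finset.prod_empty]
  set a := r 0 with hA
  set b := r 1 with hB
  set c := r 2 with hC
  set d := r 3 with hD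
  rw [show ((a-b)^2 * ((a-c)^2 * (a-d)^2) * ((b-c)^2 * (b-d)^2) * (c-d)^2) * 1 =
      256 * (a*b*c*d)^3
      - 192 * (a+b+c+d) * (a*b*c + a*b*d + a*c*d + b*c*d) * (a*b*c*d)^2
      - 128 * (a*b + a*c + a*d + b*c + b*d + c*d)^2 * (a*b*c*d)^2
      + 144 * (a*b + a*c + a*d + b*c + b*d + c*d) * (a*b*c + a*b*d + a*c*d + b*c*d)^2 * (a*b*c*d)
      - 27 * (a*b*c + a*b*d + a*c*d + b*c*d)^4
      + 144 * (a+b+c+d)^2 * (a*b + a*c + a*d + b*c + b*d + c*d) * (a*b*c*d)^2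
      - 6 * (a+b+c+d)^2 * (a*b*c + a*b*d + a*c*d + b*c*d)^2 * (a*b*c*d)
      - 80 * (a+b+c+d) * (a*b + a*c + a*d + b*c + b*d + c*d)^2 * (a*b*c + a*b*d + a*c*d + b*c*d) * (a*b*c*d)
      + 18 * (a+b+c+d) * (a*b + a*c + a*d + b*c + b*d + c*d) * (a*b*c + a*b*d + a*c*d + b*c*d)^3
      + 16 * (a*b + a*c + a*d + b*c + b*d + c*d)^4 * (a*b*c*d)
      - 4 * (a*b + a*c + a*d + b*c + b*d + c*d)^3 * (a*b*c + a*b*d + a*c*d + b*c*d)^2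
      - 27 * (a+b+c+d)^4 * (a*b*c*d)^2
      + 18 * (a+b+c+d)^3 * (a*b + a*c + a*d + b*c + b*d + c*d) * (a*b*c + a*b*d + a*c*d + b*c*d) * (a*b*c*d)
      - 4 * (a+b+c+d)^3 * (a*b*c + a*b*d + a*c*d + b*c*d)^3
      - 4 * (a+b+c+d)^2 * (a*b + a*c + a*d + b*c + b*d + c*d)^3 * (a*b*c*d)
      + (a+b+c+d)^2 * (a*b + a*c + a*d + b*c + b*d + c*d)^2 * (a*b*c + a*b*d + a*c*d + b*c*d)^2
      from by ring,
    he1, he2, he3, he4]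
  ring
end
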